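/- Let λ > 0 be small and r(λ,b) := Σ_{n≥2} n e^{(1+b)} (sinh λ · e^{1+b})^{n−1} (1 + (cosh λ − 1)/sinh λ)^{n−1} with e^b = λ^{−5/12}. Then r(λ,b) → 0 as λ → 0⁺; in particular there exists λ₀ > 0 such that r(λ,b) ≤ 1 for all 0 < λ ≤ λ₀. -/

import Mathlib

open Real in
/-- `e^{1+b}` with `e^b = λ^{−5/12}`. -/
noncomputable def Efac (lam : ℝ) : ℝ := Real.exp 1 * lam ^ (-(5 : ℝ) / 12)

open Real in
/-- The Kotecký–Preiss series
`r(λ,b) = ∑_{n≥2} n e^{1+b} (sinh λ · e^{1+b})^{n−1} (1 + (cosh λ − 1)/sinh λ)^{n−1}`. -/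
noncomputable def KPseries (lam : ℝ) : ℝ :=
  ∑' n : ℕ, ((n : ℝ) + 2) * Efac lam * (Real.sinh lam * Efac lam) ^ (n + 1)
      * (1 + (Real.cosh lam - 1) / Real.sinh lam) ^ (n + 1)

open Real Filter Set

/-- auxiliary quantity `x = E (e^λ − 1)` -/
noncomputable def Xq (lam : ℝ) : ℝ := Efac lam * (Real.exp lam - 1)

lemma Efac_pos {lam : ℝ} (h : 0 < lam) : 0 < Efac lam := by
  unfold Efac
  positivity

lemma Xq_nonneg {lam : ℝ} (h : 0 < lam) : 0 ≤ Xq lam := by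
  have := Efac_pos h
  have : (1:ℝ) ≤ Real.exp lam := by
    have := Real.add_one_le_exp lam; linarith
  unfold Xq; nlinarith [Efac_pos h]

lemma term_eq {lam : ℝ} (h : 0 < lam) (n : ℕ) :
    ((n : ℝ) + 2) * Efac lam * (Real.sinh lam * Efac lam) ^ (n + 1)
      * (1 + (Real.cosh lam - 1) / Real.sinh lam) ^ (n + 1)
    = ((n : ℝ) + 2) * Efac lam * Xq lam ^ (n + 1) := by
  have hs : (0:ℝ) < Real.sinh lam := Real.sinh_pos_iff.2 h
  have key : Real.sinh lam * Efac lam * (1 + (Real.cosh lam - 1) / Real.sinh lam)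
      = Xq lam := by
    have h1 : Real.sinh lam * (1 + (Real.cosh lam - 1) / Real.sinh lam)
        = Real.exp lam - 1 := by
      field_simp
      linarith [Real.sinh_add_cosh lam]
    unfold Xq
    calc Real.sinh lam * Efac lam * (1 + (Real.cosh lam - 1) / Real.sinh lam)
        = Efac lam * (Real.sinh lam * (1 + (Real.cosh lam - 1) / Real.sinh lam)) := by ring
      _ = Efac lam * (Real.exp lam - 1) := by rw [h1]
  rw [mul_assoc, ← mul_pow, key]

lemma KPseries_eq {lam : ℝ} (h : 0 < lam) :
    KPseries lam = ∑' n : ℕ, ((n : ℝ) + 2) * Efac lam * Xq lam ^ (n + 1) :=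
  tsum_congr fun n => term_eq h n

lemma nat_bound (n : ℕ) : ((n : ℝ) + 2) ≤ 2 * 2 ^ (n + 1) := by
  have : (n : ℝ) + 2 ≤ 2 ^ (n + 2) := by
    have := Nat.lt_two_pow_self (n := n + 2)
    have : ((n + 2 : ℕ) : ℝ) ≤ ((2 ^ (n + 2) : ℕ) : ℝ) := by exact_mod_cast this.le
    simpa using this
  calc ((n : ℝ) + 2) ≤ 2 ^ (n + 2) := this
    _ = 2 * 2 ^ (n + 1) := by ring

lemma KPseries_le {lam : ℝ} (h : 0 < lam) (hx : Xq lam ≤ 1/4) :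
    KPseries lam ≤ 8 * Efac lam * Xq lam := by
  have hX0 : 0 ≤ Xq lam := Xq_nonneg h
  have hE : 0 < Efac lam := Efac_pos h
  have h2x0 : (0:ℝ) ≤ 2 * Xq lam := by linarith
  have h2x1 : 2 * Xq lam < 1 := by linarith
  have hgsum : Summable (fun n : ℕ => (2 * Xq lam) ^ n) :=
    summable_geometric_of_lt_one h2x0 h2x1
  have hg : Summable (fun n : ℕ => 2 * Efac lam * (2 * Xq lam) ^ (n + 1)) := by
    have := (hgsum.mul_left (2 * Efac lam * (2 * Xq lam)))
    refine this.congr fun n => ?_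
    rw [pow_succ]; ring
  have hle : ∀ n : ℕ, ((n : ℝ) + 2) * Efac lam * Xq lam ^ (n + 1)
      ≤ 2 * Efac lam * (2 * Xq lam) ^ (n + 1) := by
    intro n
    have h1 : ((n : ℝ) + 2) ≤ 2 * 2 ^ (n + 1) := nat_bound n
    have h2 : (2 * Xq lam) ^ (n + 1) = 2 ^ (n + 1) * Xq lam ^ (n + 1) := mul_pow _ _ _
    have hXp : (0:ℝ) ≤ Xq lam ^ (n + 1) := pow_nonneg hX0 _
    calc ((n : ℝ) + 2) * Efac lam * Xq lam ^ (n + 1)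
        = ((n : ℝ) + 2) * (Efac lam * Xq lam ^ (n + 1)) := by ring
      _ ≤ (2 * 2 ^ (n + 1)) * (Efac lam * Xq lam ^ (n + 1)) :=
          mul_le_mul_of_nonneg_right h1 (by positivity)
      _ = 2 * Efac lam * (2 * Xq lam) ^ (n + 1) := by rw [h2]; ring
  have hnn : ∀ n : ℕ, 0 ≤ ((n : ℝ) + 2) * Efac lam * Xq lam ^ (n + 1) := by
    intro n; positivity
  have hsum : Summable (fun n : ℕ => ((n : ℝ) + 2) * Efac lam * Xq lam ^ (n + 1)) :=
    Summable.of_nonneg_of_le hnn hle hg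
  have h1 : KPseries lam ≤ ∑' n : ℕ, 2 * Efac lam * (2 * Xq lam) ^ (n + 1) := by
    rw [KPseries_eq h]
    exact Summable.tsum_le_tsum hle hsum hg
  have h2 : ∑' n : ℕ, 2 * Efac lam * (2 * Xq lam) ^ (n + 1)
      = 2 * Efac lam * (2 * Xq lam) * (1 - 2 * Xq lam)⁻¹ := by
    have : (fun n : ℕ => 2 * Efac lam * (2 * Xq lam) ^ (n + 1))
        = fun n : ℕ => 2 * Efac lam * (2 * Xq lam) * (2 * Xq lam) ^ n := by
      funext n; rw [pow_succ]; ring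
    rw [this, tsum_mul_left, tsum_geometric_of_lt_one h2x0 h2x1]
  have h3 : (1 - 2 * Xq lam)⁻¹ ≤ 2 := by
    rw [inv_le_comm₀ (by linarith) (by norm_num)]
    linarith
  have h4 : 0 ≤ 2 * Efac lam * (2 * Xq lam) := by positivity
  calc KPseries lam ≤ 2 * Efac lam * (2 * Xq lam) * (1 - 2 * Xq lam)⁻¹ := by rw [← h2]; exact h1
    _ ≤ 2 * Efac lam * (2 * Xq lam) * 2 := by nlinarith
    _ = 8 * Efac lam * Xq lam := by ring

lemma KPseries_nonneg {lam : ℝ} (h : 0 < lam) : 0 ≤ KPseries lam := by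
  rw [KPseries_eq h]
  refine tsum_nonneg fun n => ?_
  have := Efac_pos h
  have := Xq_nonneg h
  positivity

lemma exp_sub_one_le {lam : ℝ} (h0 : 0 < lam) (h1 : lam ≤ 1) :
    Real.exp lam - 1 ≤ Real.exp 1 * lam := by
  have h2 : 1 - lam ≤ Real.exp (-lam) := by
    have := Real.add_one_le_exp (-lam); linarith
  have h3 : Real.exp lam * (1 - lam) ≤ 1 := by
    have := mul_le_mul_of_nonneg_left h2 (Real.exp_pos lam).le
    rwa [← Real.exp_add, add_neg_cancel, Real.exp_zero] at this
  have h4 : Real.exp lam ≤ Real.exp 1 := Real.exp_le_exp.2 h1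
  nlinarith [Real.exp_pos lam]

lemma rpow_combine {lam : ℝ} (h : 0 < lam) (a : ℝ) :
    lam ^ a * lam = lam ^ (a + 1) := by
  rw [Real.rpow_add h, Real.rpow_one]

lemma Xq_le {lam : ℝ} (h : 0 < lam) (h1 : lam ≤ 1) :
    Xq lam ≤ Real.exp 1 ^ 2 * lam ^ ((7:ℝ)/12) := by
  have hb := exp_sub_one_le h h1
  have hr : (0:ℝ) < lam ^ (-(5:ℝ)/12) := Real.rpow_pos_of_pos h _
  have key : lam ^ (-(5:ℝ)/12) * lam = lam ^ ((7:ℝ)/12) := by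
    rw [rpow_combine h]; norm_num
  have hE1 : (0:ℝ) < Real.exp 1 := Real.exp_pos 1
  unfold Xq Efac
  calc Real.exp 1 * lam ^ (-(5:ℝ)/12) * (Real.exp lam - 1)
      ≤ Real.exp 1 * lam ^ (-(5:ℝ)/12) * (Real.exp 1 * lam) := by
        apply mul_le_mul_of_nonneg_left hb; positivity
    _ = Real.exp 1 ^ 2 * (lam ^ (-(5:ℝ)/12) * lam) := by ring
    _ = Real.exp 1 ^ 2 * lam ^ ((7:ℝ)/12) := by rw [key]

lemma EX_le {lam : ℝ} (h : 0 < lam) (h1 : lam ≤ 1) :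
    Efac lam * Xq lam ≤ Real.exp 1 ^ 3 * lam ^ ((1:ℝ)/6) := by
  have hb := exp_sub_one_le h h1
  have key : lam ^ (-(5:ℝ)/12) * lam ^ (-(5:ℝ)/12) * lam = lam ^ ((1:ℝ)/6) := by
    rw [← Real.rpow_add h, rpow_combine h]; norm_num
  have hr : (0:ℝ) < lam ^ (-(5:ℝ)/12) := Real.rpow_pos_of_pos h _
  have hE1 : (0:ℝ) < Real.exp 1 := Real.exp_pos 1
  unfold Xq Efac
  calc Real.exp 1 * lam ^ (-(5:ℝ)/12) * (Real.exp 1 * lam ^ (-(5:ℝ)/12) * (Real.exp lam - 1))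
      ≤ Real.exp 1 * lam ^ (-(5:ℝ)/12) * (Real.exp 1 * lam ^ (-(5:ℝ)/12) * (Real.exp 1 * lam)) := by
        have : Real.exp 1 * lam ^ (-(5:ℝ)/12) * (Real.exp lam - 1)
            ≤ Real.exp 1 * lam ^ (-(5:ℝ)/12) * (Real.exp 1 * lam) := by
          apply mul_le_mul_of_nonneg_left hb; positivity
        apply mul_le_mul_of_nonneg_left this; positivity
    _ = Real.exp 1 ^ 3 * (lam ^ (-(5:ℝ)/12) * lam ^ (-(5:ℝ)/12) * lam) := by ring
    _ = Real.exp 1 ^ 3 * lam ^ ((1:ℝ)/6) := by rw [key]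

lemma tendsto_rpow_zero (p : ℝ) (hp : 0 < p) :
    Tendsto (fun lam : ℝ => lam ^ p) (nhdsWithin 0 (Set.Ioi 0)) (nhds 0) := by
  have h : ContinuousAt (fun x : ℝ => x ^ p) 0 :=
    Real.continuousAt_rpow_const 0 p (Or.inr hp.le)
  have := h.tendsto
  rw [Real.zero_rpow (ne_of_gt hp)] at this
  exact this.mono_left nhdsWithin_le_nhds

/-- The Kotecký–Preiss series vanishes as `λ → 0⁺`; in particular it is `≤ 1` for all
sufficiently small `λ > 0`. -/
theorem KP_condition_smallness :
    Filter.Tendsto KPseries (nhdsWithin 0 (Set.Ioi (0 : ℝ))) (nhds 0) ∧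
    ∃ lam₀ : ℝ, 0 < lam₀ ∧ ∀ lam : ℝ, 0 < lam → lam ≤ lam₀ → KPseries lam ≤ 1 := by
  -- eventually Xq lam ≤ 1/4 and lam ≤ 1
  have htX : Tendsto (fun lam : ℝ => Real.exp 1 ^ 2 * lam ^ ((7:ℝ)/12))
      (nhdsWithin 0 (Set.Ioi 0)) (nhds 0) := by
    have := (tendsto_rpow_zero ((7:ℝ)/12) (by norm_num)).const_mul (Real.exp 1 ^ 2)
    simpa using this
  have hev1 : ∀ᶠ lam in nhdsWithin 0 (Set.Ioi (0:ℝ)),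
      Real.exp 1 ^ 2 * lam ^ ((7:ℝ)/12) < 1/4 :=
    htX.eventually (eventually_lt_nhds (by norm_num : (0:ℝ) < 1/4))
  have hev2 : ∀ᶠ lam in nhdsWithin 0 (Set.Ioi (0:ℝ)), lam ≤ 1 := by
    filter_upwards [Ioc_mem_nhdsGT (by norm_num : (0:ℝ) < 1)] with lam hlam
    exact hlam.2
  have hevpos : ∀ᶠ lam in nhdsWithin 0 (Set.Ioi (0:ℝ)), 0 < lam :=
    eventually_mem_nhdsWithin.mono (fun x hx => hx)
  have hevX : ∀ᶠ lam in nhdsWithin 0 (Set.Ioi (0:ℝ)), Xq lam ≤ 1/4 := by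
    filter_upwards [hev1, hev2, hevpos] with lam h1 h2 h3
    exact le_trans (Xq_le h3 h2) h1.le
  have hup : ∀ᶠ lam in nhdsWithin 0 (Set.Ioi (0:ℝ)),
      KPseries lam ≤ 8 * (Real.exp 1 ^ 3 * lam ^ ((1:ℝ)/6)) := by
    filter_upwards [hevX, hev2, hevpos] with lam hX h2 h3
    calc KPseries lam ≤ 8 * Efac lam * Xq lam := KPseries_le h3 hX
      _ = 8 * (Efac lam * Xq lam) := by ring
      _ ≤ 8 * (Real.exp 1 ^ 3 * lam ^ ((1:ℝ)/6)) := by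
          have := EX_le h3 h2; linarith
  have hlow : ∀ᶠ lam in nhdsWithin 0 (Set.Ioi (0:ℝ)), 0 ≤ KPseries lam := by
    filter_upwards [hevpos] with lam h3
    exact KPseries_nonneg h3
  have hbound : Tendsto (fun lam : ℝ => 8 * (Real.exp 1 ^ 3 * lam ^ ((1:ℝ)/6)))
      (nhdsWithin 0 (Set.Ioi 0)) (nhds 0) := by
    have := ((tendsto_rpow_zero ((1:ℝ)/6) (by norm_num)).const_mul
      (Real.exp 1 ^ 3)).const_mul (8:ℝ)
    simpa using this
  have hmain : Tendsto KPseries (nhdsWithin 0 (Set.Ioi (0:ℝ))) (nhds 0) :=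
    tendsto_of_tendsto_of_tendsto_of_le_of_le' tendsto_const_nhds hbound hlow hup
  refine ⟨hmain, ?_⟩
  have hev : ∀ᶠ lam in nhdsWithin 0 (Set.Ioi (0:ℝ)), KPseries lam < 1 :=
    hmain.eventually (eventually_lt_nhds (by norm_num : (0:ℝ) < 1))
  rw [Filter.eventually_iff, mem_nhdsGT_iff_exists_Ioc_subset] at hev
  obtain ⟨u, hu, hsub⟩ := hev
  exact ⟨u, hu, fun lam h1 h2 => (hsub ⟨h1, h2⟩).le⟩
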